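/- With t the infinite tribonacci word, A its sequence of positions of 1s, and k defined by k ∈ ℕ₀: A(k+1) − A(k) = 4 − t(k) for all k ≥ 0. -/

import Mathlib

/-!
Since `t` is the fixed point of `σ`, the image `σ(t[0,n))` of any prefix of `t` is again a
prefix of `t`. Under `σ` every `0` yields one `1` and every letter yields one `0`, so
`σ²(t[0,k))` contains exactly `k` ones and `σ²` of any letter begins with `01`. Hence
`A k = |σ²(t[0,k))| + 1`, and `A (k+1) - A k = |σ²(t k)|`,
which is `4, 3, 2` for the letters `0, 1, 2`.
-/

/-- The tribonacci substitution on letters: 0 ↦ 01, 1 ↦ 02, 2 ↦ 0. -/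
def sigmaW : ℕ → List ℕ
  | 0 => [0, 1]
  | 1 => [0, 2]
  | _ => [0]

/-- The substitution extended to words (concatenation homomorphism). -/
def sigmaL (w : List ℕ) : List ℕ := w.flatMap sigmaW

/-- The infinite tribonacci word t = 0,1,0,2,0,1,0,0,1,0,2,...,
the fixed point of the substitution starting from 0. -/
def t (n : ℕ) : ℕ := (sigmaL^[n + 1] [0]).getD n 0

/-- A(n): position of the (n+1)-st occurrence of the letter 1 in t. -/
noncomputable def A (n : ℕ) : ℕ := Nat.nth (fun k => t k = 1) n

/-- B(n): position of the (n+1)-st occurrence of the letter 0 in t. -/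
noncomputable def B (n : ℕ) : ℕ := Nat.nth (fun k => t k = 0) n

/-- C(n): position of the (n+1)-st occurrence of the letter 2 in t. -/
noncomputable def C (n : ℕ) : ℕ := Nat.nth (fun k => t k = 2) n

namespace Tribonacci

lemma sigmaL_append (l₁ l₂ : List ℕ) : sigmaL (l₁ ++ l₂) = sigmaL l₁ ++ sigmaL l₂ :=
  List.flatMap_append

lemma sigmaL_cons (a : ℕ) (l : List ℕ) : sigmaL (a :: l) = sigmaW a ++ sigmaL l :=
  List.flatMap_cons

lemma le_two_of_mem_sigmaL {l : List ℕ} {x : ℕ} (hx : x ∈ sigmaL l) : x ≤ 2 := by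
  obtain ⟨a, -, hx⟩ := List.mem_flatMap.mp hx
  match a with
  | 0 | 1 | _ + 2 => simp only [sigmaW, List.mem_cons, List.not_mem_nil, or_false] at hx; omega

lemma count_one_sigmaL (l : List ℕ) : (sigmaL l).count 1 = l.count 0 := by
  induction l with
  | nil => rfl
  | cons a l ih =>
    rw [sigmaL_cons, List.count_append, ih, List.count_cons]
    match a with
    | 0 | 1 | _ + 2 => simp [sigmaW, add_comm]

lemma count_zero_sigmaL (l : List ℕ) : (sigmaL l).count 0 = l.length := by
  induction l with
  | nil => rfl
  | cons a l ih =>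
    rw [sigmaL_cons, List.count_append, ih, List.length_cons]
    match a with
    | 0 | 1 | _ + 2 => simp [sigmaW, add_comm]

lemma sigmaL_sigmaL_singleton (a : ℕ) : ∃ r, sigmaL (sigmaL [a]) = 0 :: 1 :: r :=
  match a with
  | 0 => ⟨[0, 2], rfl⟩
  | 1 => ⟨[0], rfl⟩
  | _ + 2 => ⟨[], rfl⟩

lemma length_sigmaL_sigmaL_singleton {a : ℕ} (ha : a ≤ 2) :
    ((sigmaL (sigmaL [a])).length : ℤ) = 4 - a := by
  interval_cases a <;> rfl

def approx (m : ℕ) : List ℕ := sigmaL^[m] [0]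

lemma approx_succ (m : ℕ) : approx (m + 1) = sigmaL (approx m) :=
  Function.iterate_succ_apply' _ _ _

lemma approx_prefix_succ (m : ℕ) : approx m <+: approx (m + 1) := by
  induction m with
  | zero => exact ⟨[1], rfl⟩
  | succ m ih => rw [approx_succ, approx_succ]; exact ih.flatMap sigmaW

lemma approx_prefix_of_le {m m' : ℕ} (h : m ≤ m') : approx m <+: approx m' := by
  induction m', h using Nat.le_induction with
  | base => exact List.prefix_refl _
  | succ m' _ ih => exact ih.trans (approx_prefix_succ m')

lemma length_le_length_sigmaL (l : List ℕ) : l.length ≤ (sigmaL l).length := by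
  induction l with
  | nil => rfl
  | cons a l ih =>
    rw [sigmaL_cons, List.length_append, List.length_cons]
    have : 1 ≤ (sigmaW a).length := by match a with | 0 | 1 | _ + 2 => simp [sigmaW]
    omega

lemma lt_length_approx (m : ℕ) : m < (approx m).length := by
  induction m with
  | zero => simp [approx]
  | succ m ih =>
    obtain ⟨r, hr⟩ := approx_prefix_of_le (Nat.zero_le m)
    have hr' : approx m = 0 :: r := hr.symm
    have := length_le_length_sigmaL r
    rw [approx_succ, hr', sigmaL_cons]
    rw [hr'] at ih
    simp only [sigmaW, List.length_append, List.length_cons, List.length_nil] at ih ⊢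
    omega

lemma getElem_approx_eq {m m' n : ℕ} (h : n < (approx m).length) (h' : n < (approx m').length) :
    (approx m)[n] = (approx m')[n] := by
  rcases le_total m m' with hm | hm
  · exact (approx_prefix_of_le hm).getElem h
  · exact ((approx_prefix_of_le hm).getElem h').symm

lemma t_eq_getElem_approx {m n : ℕ} (h : n < (approx m).length) : t n = (approx m)[n] := by
  have hn : n < (approx (n + 1)).length := n.lt_succ_self.trans (lt_length_approx _)
  rw [t, ← approx, List.getD_eq_getElem _ _ hn]
  exact getElem_approx_eq hn h

lemma t_le_two (n : ℕ) : t n ≤ 2 := by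
  have hn : n < (approx (n + 1)).length := n.lt_succ_self.trans (lt_length_approx _)
  rw [t_eq_getElem_approx hn]
  apply le_two_of_mem_sigmaL (l := approx n)
  rw [← approx_succ]
  exact List.getElem_mem hn

def pref (n : ℕ) : List ℕ := (List.range n).map t

@[simp]
lemma length_pref (n : ℕ) : (pref n).length = n := by simp [pref]

@[simp]
lemma getElem_pref {n i : ℕ} (h : i < (pref n).length) : (pref n)[i] = t i := by simp [pref]

lemma pref_succ (n : ℕ) : pref (n + 1) = pref n ++ [t n] := by
  simp [pref, List.range_succ]

lemma take_pref {m n : ℕ} (h : m ≤ n) : (pref n).take m = pref m := by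
  rw [pref, pref, ← List.map_take, List.take_range, min_eq_left h]

lemma pref_eq_take_approx {m n : ℕ} (h : n ≤ (approx m).length) : pref n = (approx m).take n :=
  List.ext_getElem (by simp [h]) fun i _ hi => by
    simp only [getElem_pref, List.getElem_take]
    exact t_eq_getElem_approx (hi.trans_le (List.length_take_le' _ _))

lemma sigmaL_pref (n : ℕ) : sigmaL (pref n) = pref (sigmaL (pref n)).length := by
  have hpre : sigmaL (pref n) <+: approx (n + 1) := by
    rw [pref_eq_take_approx (lt_length_approx n).le, approx_succ]
    exact (List.take_prefix _ _).flatMap sigmaW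
  rw [pref_eq_take_approx hpre.length_le]
  exact List.prefix_iff_eq_take.mp hpre

lemma sigmaL_eq_pref {l : List ℕ} (h : l = pref l.length) :
    sigmaL l = pref (sigmaL l).length := by
  rw [h]
  exact sigmaL_pref _

lemma count_eq_count_pref (a n : ℕ) : Nat.count (fun i => t i = a) n = (pref n).count a := by
  induction n with
  | zero => rfl
  | succ n ih => simp [Nat.count_succ, ih, pref_succ, List.count_singleton]

lemma A_eq_length_sigmaL_sigmaL_pref (k : ℕ) : A k = (sigmaL (sigmaL (pref k))).length + 1 := by
  set L := sigmaL (sigmaL (pref k))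
  obtain ⟨r, hr⟩ := sigmaL_sigmaL_singleton (t k)
  have hP : L ++ 0 :: 1 :: r = pref (L ++ 0 :: 1 :: r).length := by
    have := sigmaL_eq_pref (sigmaL_pref (k + 1))
    rwa [pref_succ, sigmaL_append, sigmaL_append, hr] at this
  have hone : t (L.length + 1) = 1 := by
    have := congrArg (·[L.length + 1]?) hP
    rw [List.getElem?_append_right (Nat.le_succ _), pref, List.getElem?_map,
      List.getElem?_range (by simp)] at this
    simpa using this.symm
  have hcount : Nat.count (fun i => t i = 1) (L.length + 1) = k := by
    rw [count_eq_count_pref, ← take_pref (m := L.length + 1) (n := (L ++ 0 :: 1 :: r).length)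
      (by simp), ← hP, List.take_length_add_append, List.count_append, count_one_sigmaL,
      count_zero_sigmaL]
    simp
  rw [A, ← hcount, Nat.nth_count (p := fun i => t i = 1) hone]

end Tribonacci

open Tribonacci in
/-- A(k+1) − A(k) = 4 − t(k) for all k ≥ 0. -/
theorem A_diff (k : ℕ) : (A (k + 1) : ℤ) - A k = 4 - t k := by
  rw [A_eq_length_sigmaL_sigmaL_pref, A_eq_length_sigmaL_sigmaL_pref, pref_succ, sigmaL_append,
    sigmaL_append, List.length_append]
  push_cast
  rw [length_sigmaL_sigmaL_singleton (t_le_two k)]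
  ring
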